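/- Let F_q have characteristic p, let g ∈ F_q[X] be monic irreducible of degree n and order e (g(0) ≠ 0), let t = (q^n − 1)/e, and let 1 ≤ r ≤ b. Let S_r be the set of sequences in Ω(g^b) whose minimal polynomial is exactly g^r, and let c be the least nonnegative integer with p^c ≥ r. Then: every sequence in S_r has least period e·p^c; the cardinality of S_r is q^{nr} − q^{n(r−1)}; and S_r is the disjoint union of exactly (q^{nr} − q^{n(r−1)})/(e·p^c) = t·q^{n(r−1)}/p^c shift-equivalence classes, each containing e·p^c sequences. -/

import Mathlib

open Polynomial

/-- The (left) shift operator `L` on sequences over `F`, as an `F`-linear endomorphism. -/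
def shiftL (F : Type*) [CommSemiring F] : Module.End F (ℕ → F) where
  toFun s := fun i => s (i + 1)
  map_add' _ _ := rfl
  map_smul' _ _ := rfl

/-- For a polynomial `f`, the operator `f(L)` on sequences. -/
noncomputable def polyL {F : Type*} [CommSemiring F] (f : Polynomial F) :
    Module.End F (ℕ → F) :=
  Polynomial.aeval (shiftL F) f

/-- `Ω(f)`: the set of sequences annihilated by `f(L)`. -/
def OmegaSet {F : Type*} [CommSemiring F] (f : Polynomial F) : Set (ℕ → F) :=
  {s | polyL f s = 0}

/-- Two sequences are shift equivalent if one is a shift of the other. -/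
def ShiftEquiv {F : Type*} [CommSemiring F] (s s' : ℕ → F) : Prop :=
  ∃ ℓ : ℕ, s' = (shiftL F ^ ℓ) s

/-- The cycle (shift-equivalence class) of a sequence. -/
def seqCycle {F : Type*} [CommSemiring F] (s : ℕ → F) : Set (ℕ → F) :=
  {s' | ∃ ℓ : ℕ, s' = (shiftL F ^ ℓ) s}

/-- `N` is the least period of the sequence `s`. -/
def IsLeastPeriod {F : Type*} (s : ℕ → F) (N : ℕ) : Prop :=
  0 < N ∧ (∀ i, s (i + N) = s i) ∧ ∀ M : ℕ, 0 < M → (∀ i, s (i + M) = s i) → N ≤ M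

/-- `h` is the minimal polynomial of the sequence `s`: it is monic, annihilates `s`,
and divides every polynomial annihilating `s`. -/
def IsMinPolyOfSeq {F : Type*} [CommSemiring F] (s : ℕ → F) (h : Polynomial F) : Prop :=
  h.Monic ∧ polyL h s = 0 ∧ ∀ h' : Polynomial F, polyL h' s = 0 → h ∣ h'

/-- `e = ord(f)`: the least `N ≥ 1` with `f ∣ X^N - 1`. -/
def IsOrderOf {F : Type*} [CommRing F] (f : Polynomial F) (e : ℕ) : Prop :=
  0 < e ∧ f ∣ X ^ e - 1 ∧ ∀ N : ℕ, 0 < N → f ∣ X ^ N - 1 → e ≤ N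

/-!
Write `S = Ω(g^r) \ Ω(g^(r-1))`. A sequence with minimal polynomial `h` has least period
`ord(h)`, and `ord(g^r) = e·p^c` by the Frobenius together with the squarefreeness of `X^m - 1`
for `p ∤ m`. `Ω(f)` is the solution space of a linear recurrence of order `deg f`, so
`|S| = q^(nr) - q^(n(r-1))`. Shifts preserve `S`, and each orbit of the shift on `S` has exactly
`e·p^c` elements, which gives the number of cycles.
-/

open Function

section Shift

variable {F : Type*} [CommSemiring F] {s : ℕ → F}

lemma shiftL_pow_apply (s : ℕ → F) (k i : ℕ) : (shiftL F ^ k) s i = s (i + k) := by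
  induction k generalizing s with
  | zero => rfl
  | succ k ih => rw [pow_succ, Module.End.mul_apply, ih]; exact congrArg s (by omega)

lemma polyL_X_pow (k : ℕ) : polyL (X ^ k : F[X]) = shiftL F ^ k := by
  rw [polyL, map_pow, aeval_X]

lemma polyL_mul_apply (f h : F[X]) (s : ℕ → F) : polyL (f * h) s = polyL f (polyL h s) := by
  rw [polyL, map_mul, Module.End.mul_apply]; rfl

lemma isPeriodicPt_shiftL_iff {N : ℕ} : IsPeriodicPt (shiftL F) N s ↔ ∀ i, s (i + N) = s i := by
  rw [IsPeriodicPt, IsFixedPt, ← Module.End.coe_pow, funext_iff]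
  simp only [shiftL_pow_apply]

lemma OmegaSet_subset_of_dvd {f h : F[X]} (hd : h ∣ f) : OmegaSet h ⊆ OmegaSet f := by
  rintro s (hs : polyL h s = 0)
  obtain ⟨u, rfl⟩ := hd
  change polyL (h * u) s = 0
  rw [mul_comm, polyL_mul_apply, hs, map_zero]

lemma seqCycle_subset_OmegaSet {f : F[X]} (hs : s ∈ OmegaSet f) : seqCycle s ⊆ OmegaSet f := by
  rintro _ ⟨ℓ, rfl⟩
  have hcomm : Commute (polyL f) (shiftL F ^ ℓ) := by
    rw [← polyL_X_pow]; exact (Commute.all f _).map (aeval (shiftL F))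
  change polyL f _ = 0
  rw [← Module.End.mul_apply, hcomm.eq, Module.End.mul_apply, hs, map_zero]

end Shift

section Periodic

variable {F : Type*} [CommRing F] {s : ℕ → F}

lemma polyL_X_pow_sub_one_eq_zero_iff {N : ℕ} :
    polyL (X ^ N - 1 : F[X]) s = 0 ↔ IsPeriodicPt (shiftL F) N s := by
  rw [polyL, map_sub, map_one, ← polyL, polyL_X_pow, LinearMap.sub_apply, sub_eq_zero,
    IsPeriodicPt, IsFixedPt, Module.End.coe_pow]
  rfl

lemma IsMinPolyOfSeq.isLeastPeriod {h : F[X]} {N : ℕ} (hs : IsMinPolyOfSeq s h)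
    (hN : IsOrderOf h N) : IsLeastPeriod s N := by
  have hper (M : ℕ) : polyL (X ^ M - 1) s = 0 ↔ ∀ i, s (i + M) = s i :=
    polyL_X_pow_sub_one_eq_zero_iff.trans isPeriodicPt_shiftL_iff
  exact ⟨hN.1, (hper N).mp (OmegaSet_subset_of_dvd hN.2.1 hs.2.1),
    fun M hM hM' => hN.2.2 M hM (hs.2.2 _ ((hper M).mpr hM'))⟩

end Periodic

section Count

variable {F : Type*} [CommRing F]

def Polynomial.toLinearRecurrence (f : F[X]) : LinearRecurrence F :=
  ⟨f.natDegree, fun i => -f.coeff i⟩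

lemma polyL_apply_eq_sum (f : F[X]) (s : ℕ → F) (i : ℕ) :
    polyL f s i = ∑ j ∈ Finset.range (f.natDegree + 1), f.coeff j * s (i + j) := by
  rw [polyL, aeval_eq_sum_range, LinearMap.sum_apply, Finset.sum_apply]
  refine Finset.sum_congr rfl fun j _ => ?_
  rw [LinearMap.smul_apply, Pi.smul_apply, shiftL_pow_apply, smul_eq_mul]

lemma Polynomial.Monic.OmegaSet_eq_solSpace {f : F[X]} (hf : f.Monic) :
    OmegaSet f = f.toLinearRecurrence.solSpace := by
  ext s
  refine funext_iff.trans (forall_congr' fun n => ?_)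
  rw [polyL_apply_eq_sum, Finset.sum_range_succ, hf.coeff_natDegree, one_mul,
    ← Fin.sum_univ_eq_sum_range (fun j => f.coeff j * s (n + j))]
  simp only [Polynomial.toLinearRecurrence, neg_mul, Finset.sum_neg_distrib, Pi.zero_apply]
  rw [eq_neg_iff_add_eq_zero, add_comm]
  rfl

lemma Polynomial.Monic.ncard_OmegaSet [Fintype F] {f : F[X]} (hf : f.Monic) :
    (OmegaSet f).ncard = Fintype.card F ^ f.natDegree := by
  rw [hf.OmegaSet_eq_solSpace, ← Nat.card_coe_set_eq]
  exact (Nat.card_congr f.toLinearRecurrence.toInit.toEquiv).trans (by simp [toLinearRecurrence])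

lemma Polynomial.Monic.finite_OmegaSet [Finite F] {f : F[X]} (hf : f.Monic) :
    (OmegaSet f).Finite := by
  rw [hf.OmegaSet_eq_solSpace, ← Set.finite_coe_iff]
  exact Finite.of_equiv _ f.toLinearRecurrence.toInit.toEquiv.symm

end Count

section Order

lemma dvd_X_pow_sub_one_iff_root_pow_eq_one {R : Type*} [CommRing R] {f : R[X]} {N : ℕ} :
    f ∣ X ^ N - 1 ↔ AdjoinRoot.root f ^ N = 1 := by
  rw [← AdjoinRoot.mk_eq_zero, map_sub, map_pow, AdjoinRoot.mk_X, map_one, sub_eq_zero]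

lemma le_of_pow_dvd_pow_of_squarefree {R : Type*} [CommMonoidWithZero R] [IsCancelMulZero R]
    {g w : R} (hg : Prime g) (hw : Squarefree w) (hgw : g ∣ w) {r m : ℕ} (h : g ^ r ∣ w ^ m) :
    r ≤ m := by
  obtain ⟨v, rfl⟩ := hgw
  have hv : ¬ g ∣ v := fun ⟨x, hx⟩ => hg.not_isUnit (hw g ⟨x, by rw [hx, mul_assoc]⟩)
  rw [mul_pow] at h
  exact (pow_dvd_pow_iff hg.ne_zero hg.not_isUnit).mp
    (hg.pow_dvd_of_dvd_mul_right r (fun h' => hv (hg.dvd_of_dvd_pow h')) h)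

namespace IsOrderOf

variable {R : Type*} [CommRing R] {f : R[X]} {e : ℕ}

lemma orderOf_root (he : IsOrderOf f e) : orderOf (AdjoinRoot.root f) = e := by
  rw [orderOf_eq_iff he.1]
  exact ⟨dvd_X_pow_sub_one_iff_root_pow_eq_one.mp he.2.1, fun m hm hm0 h =>
    (he.2.2 m hm0 (dvd_X_pow_sub_one_iff_root_pow_eq_one.mpr h)).not_gt hm⟩

lemma dvd_X_pow_sub_one_iff (he : IsOrderOf f e) {N : ℕ} : f ∣ X ^ N - 1 ↔ e ∣ N := by
  rw [dvd_X_pow_sub_one_iff_root_pow_eq_one, ← he.orderOf_root, orderOf_dvd_iff_pow_eq_one]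

variable {F : Type*} [Field F] {g : F[X]}

lemma dvd_card_pow_natDegree_sub_one [Fintype F] (hirr : Irreducible g) (he : IsOrderOf g e) :
    e ∣ Fintype.card F ^ g.natDegree - 1 := by
  have := Fact.mk hirr
  let pb := AdjoinRoot.powerBasis hirr.ne_zero
  let := Module.fintypeOfFintype pb.basis
  have hcard : Fintype.card (AdjoinRoot g) = Fintype.card F ^ g.natDegree := by
    rw [Module.card_fintype pb.basis, Fintype.card_fin]; rfl
  have hroot : AdjoinRoot.root g ≠ 0 := by
    intro h0
    simpa [h0, zero_pow he.1.ne'] using dvd_X_pow_sub_one_iff_root_pow_eq_one.mp he.2.1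
  rw [← he.orderOf_root, ← hcard]
  exact orderOf_dvd_of_pow_eq_one (FiniteField.pow_card_sub_one_eq_one _ hroot)

lemma not_dvd_of_charP {p : ℕ} (hp : p.Prime) [CharP F p] (hirr : Irreducible g)
    (he : IsOrderOf g e) : ¬ p ∣ e := by
  have := Fact.mk hp
  rintro ⟨k, rfl⟩
  have hk : 0 < k := Nat.pos_of_mul_pos_left he.1
  have hfrob : (X : F[X]) ^ (p * k) - 1 = (X ^ k - 1) ^ p := by
    rw [sub_pow_char, one_pow, ← pow_mul, mul_comm]
  have hgk : g ∣ X ^ k - 1 := hirr.prime.dvd_of_dvd_pow (hfrob ▸ he.2.1)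
  have hpk : p * k ≤ k := he.2.2 k hk hgk
  nlinarith [hp.two_le]

/-- `ord(g^r) = ord(g)·p^c`: the Frobenius gives `X^(e p^c) - 1 = (X^e - 1)^(p^c)`, and conversely
a multiple `e p^j u` of `e` (`p ∤ u`) has `X^(e p^j u) - 1 = W^(p^j)` with `W = X^(e u) - 1`
squarefree, so `g^r` can divide it only if `r ≤ p^j`. -/
theorem pow {p : ℕ} (hp : p.Prime) [CharP F p] (hirr : Irreducible g) (he : IsOrderOf g e)
    {r c : ℕ} (hr : 1 ≤ r) (hc1 : r ≤ p ^ c) (hc2 : ∀ c' : ℕ, r ≤ p ^ c' → c ≤ c') :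
    IsOrderOf (g ^ r) (e * p ^ c) := by
  have := Fact.mk hp
  have hfrob : ∀ a j : ℕ, (X : F[X]) ^ (a * p ^ j) - 1 = (X ^ a - 1) ^ p ^ j := fun a j => by
    rw [sub_pow_char_pow, one_pow, ← pow_mul]
  refine ⟨Nat.mul_pos he.1 (pow_pos hp.pos c), ?_, fun N hN hdvd => ?_⟩
  · rw [hfrob]
    exact (pow_dvd_pow g hc1).trans (pow_dvd_pow_of_dvd he.2.1 _)
  obtain ⟨k, rfl⟩ := he.dvd_X_pow_sub_one_iff.mp ((dvd_pow_self g (by omega)).trans hdvd)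
  obtain ⟨j, u, hpu, rfl⟩ :=
    Nat.exists_eq_pow_mul_and_not_dvd (Nat.pos_of_mul_pos_left hN).ne' p hp.one_lt.ne'
  have hsqf : Squarefree ((X : F[X]) ^ (e * u) - 1) := by
    refine (X_pow_sub_one_separable_iff.mpr ?_).squarefree
    rw [Ne, CharP.cast_eq_zero_iff F p, hp.dvd_mul]
    exact not_or_intro (he.not_dvd_of_charP hp hirr) hpu
  have hrj : r ≤ p ^ j := by
    refine le_of_pow_dvd_pow_of_squarefree hirr.prime hsqf
      (he.dvd_X_pow_sub_one_iff.mpr (dvd_mul_right e u)) ?_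
    rwa [← hfrob, mul_assoc, mul_comm u]
  calc e * p ^ c ≤ e * p ^ j := Nat.mul_le_mul_left e (Nat.pow_le_pow_right hp.pos (hc2 j hrj))
    _ ≤ e * (p ^ j * u) := Nat.le_of_dvd hN (mul_dvd_mul_left e (dvd_mul_right _ _))

end IsOrderOf

end Order

lemma Set.ncard_image_mul_of_ncard_fiber {α β : Type*} {S : Set α} (hS : S.Finite) (φ : α → β)
    {N : ℕ} (h : ∀ a ∈ S, {x ∈ S | φ x = φ a}.ncard = N) : (φ '' S).ncard * N = S.ncard := by
  classical
  obtain ⟨T, rfl⟩ := hS.exists_finset_coe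
  rw [← Finset.coe_image, Set.ncard_coe_finset, Set.ncard_coe_finset,
    Finset.card_eq_sum_card_image φ T, Finset.sum_const_nat]
  intro b hb
  obtain ⟨a, ha, rfl⟩ := Finset.mem_image.mp hb
  rw [← h a ha, ← Set.ncard_coe_finset, Finset.coe_filter]
  rfl

section Cycles

variable {F : Type*} [CommSemiring F] {s s' : ℕ → F}

lemma IsLeastPeriod.mem_periodicPts {N : ℕ} (h : IsLeastPeriod s N) :
    s ∈ periodicPts (shiftL F) :=
  ⟨N, h.1, isPeriodicPt_shiftL_iff.mpr h.2.1⟩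

lemma IsLeastPeriod.minimalPeriod_shiftL {N : ℕ} (h : IsLeastPeriod s N) :
    minimalPeriod (shiftL F) s = N := by
  have hper : IsPeriodicPt (shiftL F) N s := isPeriodicPt_shiftL_iff.mpr h.2.1
  refine (hper.minimalPeriod_le h.1).antisymm (h.2.2 _ (hper.minimalPeriod_pos h.1) ?_)
  exact isPeriodicPt_shiftL_iff.mp (isPeriodicPt_minimalPeriod _ _)

lemma seqCycle_eq_range (s : ℕ → F) : seqCycle s = Set.range fun ℓ => (shiftL F)^[ℓ] s := by
  ext s'
  simp only [seqCycle, Module.End.coe_pow, Set.mem_range, eq_comm]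
  rfl

lemma mem_seqCycle_self : s ∈ seqCycle s := ⟨0, rfl⟩

lemma seqCycle_subset_of_mem (h : s' ∈ seqCycle s) : seqCycle s' ⊆ seqCycle s := by
  obtain ⟨ℓ, rfl⟩ := h
  rintro _ ⟨m, rfl⟩
  exact ⟨m + ℓ, by rw [pow_add, Module.End.mul_apply]⟩

lemma mem_seqCycle_symm (hs : s ∈ periodicPts (shiftL F)) (h : s' ∈ seqCycle s) :
    s ∈ seqCycle s' := by
  obtain ⟨N, hN, hper⟩ := hs
  obtain ⟨ℓ, rfl⟩ := h
  refine ⟨N * ℓ - ℓ, ?_⟩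
  rw [← Module.End.mul_apply, ← pow_add, Nat.sub_add_cancel (Nat.le_mul_of_pos_left ℓ hN),
    Module.End.coe_pow]
  exact (hper.mul_const ℓ).eq.symm

lemma seqCycle_eq_of_mem (hs : s ∈ periodicPts (shiftL F)) (h : s' ∈ seqCycle s) :
    seqCycle s' = seqCycle s :=
  (seqCycle_subset_of_mem h).antisymm (seqCycle_subset_of_mem (mem_seqCycle_symm hs h))

lemma ncard_seqCycle_eq_minimalPeriod (hs : s ∈ periodicPts (shiftL F)) :
    (seqCycle s).ncard = minimalPeriod (shiftL F) s := by
  have himage : seqCycle s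
      = (fun ℓ => (shiftL F)^[ℓ] s) '' Set.Iio (minimalPeriod (shiftL F) s) := by
    rw [seqCycle_eq_range]
    refine (Set.image_subset_range _ _).antisymm' ?_
    rintro _ ⟨ℓ, rfl⟩
    exact ⟨ℓ % _, Nat.mod_lt _ (minimalPeriod_pos_of_mem_periodicPts hs),
      iterate_mod_minimalPeriod_eq⟩
  rw [himage, iterate_injOn_Iio_minimalPeriod.ncard_image, ← Finset.coe_Iio, Set.ncard_coe_finset,
    Nat.card_Iio]

lemma IsLeastPeriod.ncard_seqCycle {N : ℕ} (h : IsLeastPeriod s N) : (seqCycle s).ncard = N := by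
  rw [ncard_seqCycle_eq_minimalPeriod h.mem_periodicPts, h.minimalPeriod_shiftL]

lemma seqCycle_subset_OmegaSet_diff {f h : F[X]} (hs : s ∈ periodicPts (shiftL F))
    (hmem : s ∈ OmegaSet f \ OmegaSet h) : seqCycle s ⊆ OmegaSet f \ OmegaSet h :=
  fun _ hs' => ⟨seqCycle_subset_OmegaSet hmem.1 hs',
    fun h' => hmem.2 (seqCycle_subset_OmegaSet h' (mem_seqCycle_symm hs hs'))⟩

lemma ncard_seqCycles_mul {S : Set (ℕ → F)} (hS : S.Finite) {N : ℕ}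
    (hper : ∀ s ∈ S, IsLeastPeriod s N) (hinv : ∀ s ∈ S, seqCycle s ⊆ S) :
    {C | ∃ s ∈ S, C = seqCycle s}.ncard * N = S.ncard := by
  have hcycles : {C | ∃ s ∈ S, C = seqCycle s} = seqCycle '' S := by
    ext C; simp only [Set.mem_image, eq_comm]; rfl
  rw [hcycles]
  refine Set.ncard_image_mul_of_ncard_fiber hS _ fun s hs => ?_
  have hfiber : {x ∈ S | seqCycle x = seqCycle s} = seqCycle s := by
    ext x
    exact ⟨fun ⟨_, hx⟩ => hx ▸ mem_seqCycle_self,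
      fun hx => ⟨hinv s hs hx, seqCycle_eq_of_mem (hper s hs).mem_periodicPts hx⟩⟩
  rw [hfiber, (hper s hs).ncard_seqCycle]

end Cycles

section MinPoly

variable {F : Type*} [Field F] {s : ℕ → F}

lemma polyL_gcd_eq_zero {a b : F[X]} (ha : polyL a s = 0) (hb : polyL b s = 0) :
    polyL (IsBezout.gcd a b) s = 0 := by
  obtain ⟨x, y, hxy⟩ := IsBezout.gcd_eq_sum a b
  rw [← hxy, polyL, map_add, LinearMap.add_apply, ← polyL, ← polyL, polyL_mul_apply,
    polyL_mul_apply, ha, hb, map_zero, map_zero, add_zero]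

lemma isMinPolyOfSeq_pow_iff {g : F[X]} (hmonic : g.Monic) (hirr : Irreducible g) {r : ℕ}
    (hr : 1 ≤ r) : IsMinPolyOfSeq s (g ^ r) ↔ s ∈ OmegaSet (g ^ r) \ OmegaSet (g ^ (r - 1)) := by
  constructor
  · rintro ⟨-, hann, hmin⟩
    refine ⟨hann, fun hmem => ?_⟩
    have := (pow_dvd_pow_iff hirr.ne_zero hirr.not_isUnit).mp (hmin _ hmem)
    omega
  · rintro ⟨hann, hnot⟩
    refine ⟨hmonic.pow r, hann, fun h hh => ?_⟩
    have hgcd := polyL_gcd_eq_zero hann hh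
    obtain ⟨i, -, hassoc⟩ := (dvd_prime_pow hirr.prime r).mp (IsBezout.gcd_dvd_left _ h)
    have hri : r ≤ i := by
      by_contra! hir
      exact hnot (OmegaSet_subset_of_dvd (hassoc.dvd.trans (pow_dvd_pow g (by omega))) hgcd)
    exact (pow_dvd_pow g hri).trans (hassoc.symm.dvd.trans (IsBezout.gcd_dvd_right _ _))

end MinPoly

lemma Nat.pow_mul_sub_pow_mul_pred_div {q n r e t d : ℕ} (hr : 1 ≤ r) (he : 0 < e)
    (het : q ^ n - 1 = e * t) :
    (q ^ (n * r) - q ^ (n * (r - 1))) / (e * d) = t * q ^ (n * (r - 1)) / d := by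
  obtain ⟨r, rfl⟩ : ∃ r', r = r' + 1 := ⟨r - 1, by omega⟩
  have hsplit : q ^ (n * (r + 1)) - q ^ (n * r) = e * (t * q ^ (n * r)) := by
    rw [mul_add, mul_one, pow_add, ← Nat.mul_sub_one, het, mul_left_comm, mul_comm t]
  rw [Nat.add_sub_cancel, hsplit, Nat.mul_div_mul_left _ _ he]

theorem stmt5_general {F : Type*} [Field F] [Fintype F] (p : ℕ) (hp : p.Prime) [CharP F p]
    (g : Polynomial F) (hmonic : g.Monic) (hirr : Irreducible g)
    (n : ℕ) (hdeg : g.natDegree = n)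
    (e : ℕ) (he : IsOrderOf g e)
    (t : ℕ) (ht : t = (Fintype.card F ^ n - 1) / e)
    (b r : ℕ) (hr1 : 1 ≤ r) (hrb : r ≤ b)
    (c : ℕ) (hc1 : r ≤ p ^ c) (hc2 : ∀ c' : ℕ, r ≤ p ^ c' → c ≤ c')
    (S : Set (ℕ → F))
    (hS : S = {s | s ∈ OmegaSet (g ^ b) ∧ IsMinPolyOfSeq s (g ^ r)}) :
    (∀ s ∈ S, IsLeastPeriod s (e * p ^ c)) ∧
    S.ncard = Fintype.card F ^ (n * r) - Fintype.card F ^ (n * (r - 1)) ∧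
    (∀ s ∈ S, seqCycle s ⊆ S ∧ (seqCycle s).ncard = e * p ^ c) ∧
    {C : Set (ℕ → F) | ∃ s ∈ S, C = seqCycle s}.ncard
      = (Fintype.card F ^ (n * r) - Fintype.card F ^ (n * (r - 1))) / (e * p ^ c) ∧
    (Fintype.card F ^ (n * r) - Fintype.card F ^ (n * (r - 1))) / (e * p ^ c)
      = t * Fintype.card F ^ (n * (r - 1)) / p ^ c := by
  subst hdeg
  have hord : IsOrderOf (g ^ r) (e * p ^ c) := he.pow hp hirr hr1 hc1 hc2
  have hSdiff : S = OmegaSet (g ^ r) \ OmegaSet (g ^ (r - 1)) := by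
    ext s
    rw [hS, Set.mem_ofPred_eq, ← isMinPolyOfSeq_pow_iff hmonic hirr hr1]
    exact and_iff_right_of_imp fun h => OmegaSet_subset_of_dvd (pow_dvd_pow g hrb) h.2.1
  have hper : ∀ s ∈ S, IsLeastPeriod s (e * p ^ c) := fun s hs =>
    ((isMinPolyOfSeq_pow_iff hmonic hirr hr1).mpr (hSdiff ▸ hs)).isLeastPeriod hord
  have hinv : ∀ s ∈ S, seqCycle s ⊆ S := fun s hs =>
    hSdiff ▸ seqCycle_subset_OmegaSet_diff (hper s hs).mem_periodicPts (hSdiff ▸ hs)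
  have hcard : S.ncard = Fintype.card F ^ (g.natDegree * r)
      - Fintype.card F ^ (g.natDegree * (r - 1)) := by
    rw [hSdiff, Set.ncard_sdiff (OmegaSet_subset_of_dvd (pow_dvd_pow g (Nat.sub_le r 1)))
      (hmonic.pow _).finite_OmegaSet, (hmonic.pow _).ncard_OmegaSet,
      (hmonic.pow _).ncard_OmegaSet, natDegree_pow, natDegree_pow, mul_comm r, mul_comm (r - 1)]
  have hcount := ncard_seqCycles_mul (hSdiff ▸ (hmonic.pow r).finite_OmegaSet.sdiff) hper hinv
  have het : Fintype.card F ^ g.natDegree - 1 = e * t := by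
    rw [ht, Nat.mul_div_cancel' (he.dvd_card_pow_natDegree_sub_one hirr)]
  refine ⟨hper, hcard, fun s hs => ⟨hinv s hs, (hper s hs).ncard_seqCycle⟩, ?_,
    Nat.pow_mul_sub_pow_mul_pred_div hr1 he.1 het⟩
  rw [← hcard, ← hcount, Nat.mul_div_cancel _ hord.1]

/-- the sequences in `Ω(g^b)` with minimal polynomial exactly `g^r`
all have least period `e·p^c` (`c` least with `p^c ≥ r`); there are
`q^{nr} − q^{n(r−1)}` of them; and they split into exactly
`(q^{nr} − q^{n(r−1)})/(e·p^c) = t·q^{n(r−1)}/p^c` cycles, each of size `e·p^c`. -/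
theorem stmt5 {F : Type*} [Field F] [Fintype F] (p : ℕ) (hp : p.Prime) [CharP F p]
    (g : Polynomial F) (hmonic : g.Monic) (hirr : Irreducible g) (hg0 : g.coeff 0 ≠ 0)
    (n : ℕ) (hdeg : g.natDegree = n)
    (e : ℕ) (he : IsOrderOf g e)
    (t : ℕ) (ht : t = (Fintype.card F ^ n - 1) / e)
    (b r : ℕ) (hr1 : 1 ≤ r) (hrb : r ≤ b)
    (c : ℕ) (hc1 : r ≤ p ^ c) (hc2 : ∀ c' : ℕ, r ≤ p ^ c' → c ≤ c')
    (S : Set (ℕ → F))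
    (hS : S = {s | s ∈ OmegaSet (g ^ b) ∧ IsMinPolyOfSeq s (g ^ r)}) :
    (∀ s ∈ S, IsLeastPeriod s (e * p ^ c)) ∧
    S.ncard = Fintype.card F ^ (n * r) - Fintype.card F ^ (n * (r - 1)) ∧
    (∀ s ∈ S, seqCycle s ⊆ S ∧ (seqCycle s).ncard = e * p ^ c) ∧
    {C : Set (ℕ → F) | ∃ s ∈ S, C = seqCycle s}.ncard
      = (Fintype.card F ^ (n * r) - Fintype.card F ^ (n * (r - 1))) / (e * p ^ c) ∧
    (Fintype.card F ^ (n * r) - Fintype.card F ^ (n * (r - 1))) / (e * p ^ c)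
      = t * Fintype.card F ^ (n * (r - 1)) / p ^ c :=
  stmt5_general p hp g hmonic hirr n hdeg e he t ht b r hr1 hrb c hc1 hc2 S hS
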